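/- arXiv:2201.00146 — 2 statements merged into one kernel-verified Lean document; each statement's English description precedes it below -/
import Mathlib

section
/- For 0 < α < 1, a twice continuously differentiable function u : [0,T] → ℝ, and uniform grid t_k = kτ with τ = T/N, the L1 approximation D_τ^α u(t_n) = (1/Γ(1-α)) Σ_{k=0}^{n-1} ((u(t_{k+1}) - u(t_k))/τ) ∫_{t_k}^{t_{k+1}} (t_n - s)^{-α} ds satisfies |ᶜD_t^α u(t_n) − D_τ^α u(t_n)| ≤ C τ^{2-α} for a constant C depending only on α, T, and sup |u''|. -/
/-!
The L1 scheme integrates the kernel `K s = (t_n - s)^(-α)` against the cell averages of `u'`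
instead of `u'` itself. On a cell, `u'` minus its average has mean zero and size at most `M τ`,
so against the monotone kernel the cell error is at most `M τ² (K t_{k+1} - K t_k)`; these
telescope to `M τ² τ^(-α)`. The last cell, where the kernel is singular, is bounded directly by
`M τ ∫ K = M τ^(2-α) / (1-α)`.
-/

open Set MeasureTheory

section Derivative

lemma ae_derivWithin_Icc_eq_deriv (u : ℝ → ℝ) (a b : ℝ) :
    ∀ᵐ x, x ∈ Icc a b → derivWithin u (Icc a b) x = deriv u x := by
  filter_upwards [volume.ae_ne a, volume.ae_ne b] with x hxa hxb hx
  exact derivWithin_of_mem_nhds (Icc_mem_nhds (hx.1.lt_of_ne' hxa) (hx.2.lt_of_ne hxb))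

variable {u : ℝ → ℝ} {a b : ℝ}

lemma integral_derivWithin_Icc_mul_eq_integral_deriv_mul {c d : ℝ} (hc : c ∈ Icc a b)
    (hd : d ∈ Icc a b) (K : ℝ → ℝ) :
    ∫ x in c..d, derivWithin u (Icc a b) x * K x = ∫ x in c..d, deriv u x * K x := by
  refine intervalIntegral.integral_congr_ae ?_
  filter_upwards [ae_derivWithin_Icc_eq_deriv u a b] with x hx hxcd
  rw [hx (uIcc_subset_Icc hc hd (uIoc_subset_uIcc hxcd))]

lemma integral_derivWithin_Icc_eq_sub (hu : ContDiffOn ℝ 1 u (Icc a b)) {c d : ℝ}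
    (hc : a ≤ c) (hcd : c ≤ d) (hd : d ≤ b) :
    ∫ x in c..d, derivWithin u (Icc a b) x = u d - u c := by
  rw [← intervalIntegral.integral_deriv_of_contDiffOn_Icc (hu.mono (Icc_subset_Icc hc hd)) hcd]
  refine intervalIntegral.integral_congr_ae ?_
  filter_upwards [ae_derivWithin_Icc_eq_deriv u a b] with x hx hxcd
  rw [uIoc_of_le hcd] at hxcd
  exact hx ⟨hc.trans hxcd.1.le, hxcd.2.trans hd⟩

lemma abs_derivWithin_Icc_sub_le {M : ℝ} (hab : a < b) (hu : ContDiffOn ℝ 2 u (Icc a b))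
    (hM : ∀ s ∈ Ioo a b, |deriv (deriv u) s| ≤ M) {x y : ℝ} (hx : x ∈ Icc a b)
    (hy : y ∈ Icc a b) :
    |derivWithin u (Icc a b) x - derivWithin u (Icc a b) y| ≤ M * |x - y| := by
  wlog hxy : x < y generalizing x y
  · rcases (not_lt.1 hxy).eq_or_lt with rfl | hyx
    · simp
    · rw [abs_sub_comm, abs_sub_comm x]
      exact this hy hx hyx
  set g := derivWithin u (Icc a b)
  have hg : ContDiffOn ℝ 1 g (Icc a b) := hu.derivWithin (uniqueDiffOn_Icc hab) (by norm_num)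
  have hxy_sub : Icc x y ⊆ Icc a b := Icc_subset_Icc hx.1 hy.2
  have hdiff : DifferentiableOn ℝ g (Ioo x y) := fun z hz =>
    ((hg.differentiableOn one_ne_zero z (hxy_sub (Ioo_subset_Icc_self hz))).differentiableAt
      (Icc_mem_nhds (hx.1.trans_lt hz.1) (hz.2.trans_le hy.2))).differentiableWithinAt
  obtain ⟨ξ, hξ, hslope⟩ := exists_deriv_eq_slope g hxy (hg.continuousOn.mono hxy_sub) hdiff
  have hξ' : ξ ∈ Ioo a b := ⟨hx.1.trans_lt hξ.1, hξ.2.trans_le hy.2⟩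
  have hgξ : deriv g ξ = deriv (deriv u) ξ := by
    refine Filter.EventuallyEq.deriv_eq ?_
    filter_upwards [Ioo_mem_nhds hξ'.1 hξ'.2] with z hz
    exact derivWithin_of_mem_nhds (Icc_mem_nhds hz.1 hz.2)
  have hpos : 0 < y - x := sub_pos.2 hxy
  rw [abs_sub_comm, abs_sub_comm x, abs_of_pos hpos]
  calc |g y - g x| = |deriv (deriv u) ξ| * (y - x) := by
        rw [← hgξ, hslope, abs_div, abs_of_pos hpos, div_mul_cancel₀ _ hpos.ne']
    _ ≤ M * (y - x) := mul_le_mul_of_nonneg_right (hM ξ hξ') hpos.le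

end Derivative

section Kernel

variable {α : ℝ}

lemma intervalIntegrable_sub_rpow_neg (hα : α < 1) (t a b : ℝ) :
    IntervalIntegrable (fun η => (t - η) ^ (-α)) volume a b := by
  simpa using ((intervalIntegral.intervalIntegrable_rpow' (a := t - b) (b := t - a) (r := -α)
    (by linarith)).comp_sub_left t).symm

lemma monotoneOn_sub_rpow_neg (hα : 0 ≤ α) (t : ℝ) :
    MonotoneOn (fun η => (t - η) ^ (-α)) (Iio t) := fun _ _ _ hy hxy =>
  Real.rpow_le_rpow_of_nonpos (sub_pos.2 hy) (by linarith) (by linarith)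

lemma integral_sub_rpow_neg (hα : α < 1) (t τ : ℝ) :
    ∫ η in (t - τ)..t, (t - η) ^ (-α) = τ ^ (1 - α) / (1 - α) := by
  rw [intervalIntegral.integral_comp_sub_left (fun η => η ^ (-α)), sub_self, sub_sub_cancel,
    integral_rpow (Or.inl (by linarith)), Real.zero_rpow (by linarith), neg_add_eq_sub]
  ring

end Kernel

section Average

variable {g K : ℝ → ℝ} {a b L : ℝ}

lemma integral_sub_average (hab : a < b) (hg : IntervalIntegrable g volume a b) :
    ∫ x in a..b, (g x - (∫ y in a..b, g y) / (b - a)) = 0 := by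
  rw [intervalIntegral.integral_sub hg intervalIntegrable_const, intervalIntegral.integral_const,
    smul_eq_mul, mul_div_cancel₀ _ (sub_pos.2 hab).ne', sub_self]

lemma abs_sub_average_le (hab : a < b) (hg : IntervalIntegrable g volume a b)
    (hL : ∀ x ∈ Icc a b, ∀ y ∈ Icc a b, |g x - g y| ≤ L) {η : ℝ} (hη : η ∈ Icc a b) :
    |g η - (∫ y in a..b, g y) / (b - a)| ≤ L := by
  have hba : 0 < b - a := sub_pos.2 hab
  have hmean : g η - (∫ y in a..b, g y) / (b - a) = (∫ y in a..b, (g η - g y)) / (b - a) := by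
    rw [intervalIntegral.integral_sub intervalIntegrable_const hg, intervalIntegral.integral_const,
      smul_eq_mul]
    field_simp
  have hbound : ‖∫ y in a..b, (g η - g y)‖ ≤ L * |b - a| :=
    intervalIntegral.norm_integral_le_of_norm_le_const fun y hy =>
      hL η hη y (Ioc_subset_Icc_self (uIoc_of_le hab.le ▸ hy))
  rw [hmean, abs_div, abs_of_pos hba, div_le_iff₀ hba]
  rwa [Real.norm_eq_abs, abs_of_pos hba] at hbound

lemma integral_mul_sub_average_mul (hab : a < b) (hg : ContinuousOn g (Icc a b))
    (hK : IntervalIntegrable K volume a b) (c : ℝ) :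
    (∫ x in a..b, g x * K x) - (∫ y in a..b, g y) / (b - a) * ∫ x in a..b, K x =
      ∫ x in a..b, (g x - (∫ y in a..b, g y) / (b - a)) * (K x - c) := by
  set m := (∫ y in a..b, g y) / (b - a)
  have hgm : ContinuousOn (fun x => g x - m) (uIcc a b) :=
    (uIcc_of_le hab.le ▸ hg).sub continuousOn_const
  simp only [mul_sub]
  rw [intervalIntegral.integral_sub (hK.continuousOn_mul hgm) (hgm.intervalIntegrable.mul_const c),
    intervalIntegral.integral_mul_const,
    integral_sub_average hab (hg.intervalIntegrable_of_Icc hab.le), zero_mul, sub_zero]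
  simp only [sub_mul]
  rw [intervalIntegral.integral_sub (hK.continuousOn_mul (uIcc_of_le hab.le ▸ hg))
    (hK.const_mul m), intervalIntegral.integral_const_mul]

lemma abs_integral_mul_sub_average_mul_le_of_monotoneOn (hab : a < b)
    (hg : ContinuousOn g (Icc a b)) (hL : ∀ x ∈ Icc a b, ∀ y ∈ Icc a b, |g x - g y| ≤ L)
    (hK : MonotoneOn K (Icc a b)) :
    |(∫ x in a..b, g x * K x) - (∫ y in a..b, g y) / (b - a) * ∫ x in a..b, K x| ≤
      L * (b - a) * (K b - K a) := by
  have hKi : IntervalIntegrable K volume a b := (uIcc_of_le hab.le ▸ hK).intervalIntegrable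
  rw [integral_mul_sub_average_mul hab hg hKi (K a)]
  have hbound := intervalIntegral.norm_integral_le_of_norm_le_const (a := a) (b := b)
    (f := fun x => (g x - (∫ y in a..b, g y) / (b - a)) * (K x - K a)) (C := L * (K b - K a))
    fun x hx => by
      have hx' : x ∈ Icc a b := Ioc_subset_Icc_self (uIoc_of_le hab.le ▸ hx)
      have hKx : |K x - K a| ≤ K b - K a := by
        rw [abs_of_nonneg (sub_nonneg.2 (hK ⟨le_rfl, hab.le⟩ hx' hx'.1))]
        exact sub_le_sub_right (hK hx' ⟨hab.le, le_rfl⟩ hx'.2) _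
      rw [Real.norm_eq_abs, abs_mul]
      exact mul_le_mul (abs_sub_average_le hab (hg.intervalIntegrable_of_Icc hab.le) hL hx')
        hKx (abs_nonneg _) ((abs_nonneg _).trans (hL a ⟨le_rfl, hab.le⟩ a ⟨le_rfl, hab.le⟩))
  rw [Real.norm_eq_abs, abs_of_pos (sub_pos.2 hab)] at hbound
  linarith

lemma abs_integral_mul_sub_average_mul_le_of_nonneg (hab : a < b)
    (hg : ContinuousOn g (Icc a b)) (hL : ∀ x ∈ Icc a b, ∀ y ∈ Icc a b, |g x - g y| ≤ L)
    (hK : IntervalIntegrable K volume a b) (hK₀ : ∀ x ∈ Icc a b, 0 ≤ K x) :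
    |(∫ x in a..b, g x * K x) - (∫ y in a..b, g y) / (b - a) * ∫ x in a..b, K x| ≤
      L * ∫ x in a..b, K x := by
  rw [integral_mul_sub_average_mul hab hg hK 0, ← intervalIntegral.integral_const_mul,
    ← Real.norm_eq_abs]
  refine intervalIntegral.norm_integral_le_of_norm_le hab.le
    (Filter.Eventually.of_forall fun x hx => ?_) (hK.const_mul L)
  have hx' : x ∈ Icc a b := Ioc_subset_Icc_self hx
  rw [sub_zero, Real.norm_eq_abs, abs_mul, abs_of_nonneg (hK₀ x hx')]
  exact mul_le_mul_of_nonneg_right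
    (abs_sub_average_le hab (hg.intervalIntegrable_of_Icc hab.le) hL hx') (hK₀ x hx')

end Average

section Cell

variable {g : ℝ → ℝ} {α τ L : ℝ}

lemma abs_cell_error_le_of_lt (hα₀ : 0 ≤ α) (hτ : 0 < τ) {k m : ℕ} (hk : k < m)
    (hg : ContinuousOn g (Icc (k * τ) ((k + 1) * τ)))
    (hL : ∀ x ∈ Icc ((k : ℝ) * τ) ((k + 1) * τ), ∀ y ∈ Icc ((k : ℝ) * τ) ((k + 1) * τ),
      |g x - g y| ≤ L) :
    |(∫ η in k * τ..(k + 1) * τ, g η * ((m + 1) * τ - η) ^ (-α)) -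
        (∫ η in k * τ..(k + 1) * τ, g η) / τ *
          ∫ η in k * τ..(k + 1) * τ, ((m + 1) * τ - η) ^ (-α)| ≤
      L * τ * ((((m : ℝ) + 1) * τ - (k + 1) * τ) ^ (-α) - (((m : ℝ) + 1) * τ - k * τ) ^ (-α)) := by
  have hwidth : ((k : ℝ) + 1) * τ - k * τ = τ := by ring
  have hlt : ((k : ℝ) + 1) * τ < (m + 1) * τ :=
    mul_lt_mul_of_pos_right (by exact_mod_cast Nat.succ_lt_succ hk) hτ
  have := abs_integral_mul_sub_average_mul_le_of_monotoneOn (by linarith) hg hL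
    ((monotoneOn_sub_rpow_neg hα₀ _).mono fun x hx => hx.2.trans_lt hlt)
  rwa [hwidth] at this

lemma abs_last_cell_error_le (hα₁ : α < 1) (hτ : 0 < τ) {m : ℕ}
    (hg : ContinuousOn g (Icc (m * τ) ((m + 1) * τ)))
    (hL : ∀ x ∈ Icc ((m : ℝ) * τ) ((m + 1) * τ), ∀ y ∈ Icc ((m : ℝ) * τ) ((m + 1) * τ),
      |g x - g y| ≤ L) :
    |(∫ η in m * τ..(m + 1) * τ, g η * ((m + 1) * τ - η) ^ (-α)) -
        (∫ η in m * τ..(m + 1) * τ, g η) / τ *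
          ∫ η in m * τ..(m + 1) * τ, ((m + 1) * τ - η) ^ (-α)| ≤
      L * (τ ^ (1 - α) / (1 - α)) := by
  have hwidth : ((m : ℝ) + 1) * τ - m * τ = τ := by ring
  have hKint : ∫ η in m * τ..(m + 1) * τ, ((m + 1) * τ - η) ^ (-α) = τ ^ (1 - α) / (1 - α) := by
    rw [← integral_sub_rpow_neg hα₁ ((m + 1) * τ) τ, show ((m : ℝ) + 1) * τ - τ = m * τ by ring]
  have := abs_integral_mul_sub_average_mul_le_of_nonneg (by linarith) hg hL
    (intervalIntegrable_sub_rpow_neg hα₁ ((m + 1) * τ) _ _)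
    fun x hx => Real.rpow_nonneg (by linarith [hx.2]) _
  rw [hwidth] at this
  rwa [← hKint]

end Cell

lemma integral_eq_sum_integral_cells {f : ℝ → ℝ} (τ : ℝ) (n : ℕ)
    (hf : ∀ k < n, IntervalIntegrable f volume (k * τ) ((k + 1) * τ)) :
    ∫ x in (0 : ℝ)..n * τ, f x = ∑ k ∈ Finset.range n, ∫ x in k * τ..(k + 1) * τ, f x := by
  have := intervalIntegral.sum_integral_adjacent_intervals (a := fun k : ℕ => (k : ℝ) * τ)
    (μ := volume) fun k hk => by simpa only [Nat.cast_succ] using hf k hk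
  simp only [Nat.cast_succ, CharP.cast_eq_zero, zero_mul] at this
  exact this.symm

lemma sum_range_sub_rpow_neg_le {α τ : ℝ} (hτ : 0 ≤ τ) (m : ℕ) :
    ∑ k ∈ Finset.range m,
        ((((m : ℝ) + 1) * τ - (k + 1) * τ) ^ (-α) - (((m : ℝ) + 1) * τ - k * τ) ^ (-α)) ≤
      τ ^ (-α) := by
  have hsum := Finset.sum_range_sub (fun k : ℕ => (((m : ℝ) + 1) * τ - k * τ) ^ (-α)) m
  simp only [Nat.cast_succ, CharP.cast_eq_zero, zero_mul, sub_zero] at hsum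
  rw [hsum, show ((m : ℝ) + 1) * τ - m * τ = τ by ring]
  exact sub_le_self _ (Real.rpow_nonneg (by positivity) _)

theorem abs_integral_mul_kernel_sub_sum_average_le {g : ℝ → ℝ} {α τ M : ℝ} (hα₀ : 0 ≤ α)
    (hα₁ : α < 1) (hτ : 0 < τ) (hM : 0 ≤ M) (n : ℕ) (hg : ContinuousOn g (Icc 0 (n * τ)))
    (hLip : ∀ x ∈ Icc 0 (n * τ), ∀ y ∈ Icc 0 (n * τ), |g x - g y| ≤ M * |x - y|) :
    |(∫ η in (0 : ℝ)..n * τ, g η * (n * τ - η) ^ (-α)) -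
        ∑ k ∈ Finset.range n, (∫ η in k * τ..(k + 1) * τ, g η) / τ *
          ∫ η in k * τ..(k + 1) * τ, (n * τ - η) ^ (-α)| ≤
      M * (1 + 1 / (1 - α)) * τ ^ (2 - α) := by
  have h1α : 0 < 1 - α := by linarith
  have hcell : ∀ k < n, Icc ((k : ℝ) * τ) ((k + 1) * τ) ⊆ Icc 0 (n * τ) := fun k hk => by
    have : (k : ℝ) + 1 ≤ n := by exact_mod_cast hk
    exact Icc_subset_Icc (by positivity) (by gcongr)
  have hosc : ∀ k < n, ∀ x ∈ Icc ((k : ℝ) * τ) ((k + 1) * τ),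
      ∀ y ∈ Icc ((k : ℝ) * τ) ((k + 1) * τ), |g x - g y| ≤ M * τ := fun k hk x hx y hy => by
    refine (hLip x (hcell k hk hx) y (hcell k hk hy)).trans (mul_le_mul_of_nonneg_left ?_ hM)
    rw [abs_sub_le_iff]
    constructor <;> linarith [hx.1, hx.2, hy.1, hy.2]
  rw [integral_eq_sum_integral_cells τ n fun k hk =>
    (intervalIntegrable_sub_rpow_neg hα₁ _ _ _).continuousOn_mul
      (hg.mono ((uIcc_of_le (by nlinarith)).trans_subset (hcell k hk))),
    ← Finset.sum_sub_distrib]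
  obtain _ | m := n
  · simp only [Finset.range_zero, Finset.sum_empty, abs_zero]
    positivity
  push_cast at hg hcell hosc ⊢
  rw [Finset.sum_range_succ]
  calc _ ≤ ∑ k ∈ Finset.range m, M * τ * τ *
          ((((m : ℝ) + 1) * τ - (k + 1) * τ) ^ (-α) - (((m : ℝ) + 1) * τ - k * τ) ^ (-α)) +
        M * τ * (τ ^ (1 - α) / (1 - α)) := by
        refine (abs_add_le _ _).trans (add_le_add ((Finset.abs_sum_le_sum_abs _ _).trans
          (Finset.sum_le_sum fun k hk => ?_)) ?_)
        · have hk := Finset.mem_range.1 hk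
          exact abs_cell_error_le_of_lt hα₀ hτ hk (hg.mono (hcell k (by omega)))
            (hosc k (by omega))
        · exact abs_last_cell_error_le hα₁ hτ (hg.mono (hcell m m.lt_succ_self))
            (hosc m m.lt_succ_self)
    _ ≤ M * τ * τ * τ ^ (-α) + M * τ * (τ ^ (1 - α) / (1 - α)) := by
        rw [← Finset.mul_sum]
        gcongr
        exact sum_range_sub_rpow_neg_le hτ.le m
    _ = M * (1 + 1 / (1 - α)) * τ ^ (2 - α) := by
        have h₁ : τ ^ (2 - α) = τ * τ ^ (1 - α) := by
          rw [show 2 - α = 1 + (1 - α) by ring, Real.rpow_add hτ, Real.rpow_one]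
        have h₂ : τ ^ (1 - α) = τ * τ ^ (-α) := by
          rw [sub_eq_add_neg, Real.rpow_add hτ, Real.rpow_one]
        rw [h₁, h₂]
        ring

theorem abs_caputo_integral_sub_l1_sum_le {u : ℝ → ℝ} {α T M τ : ℝ} (hα₀ : 0 ≤ α)
    (hα₁ : α < 1) (hT : 0 < T) (hM : 0 ≤ M) (hu : ContDiffOn ℝ 2 u (Icc 0 T))
    (hu₂ : ∀ s ∈ Ioo 0 T, |deriv (deriv u) s| ≤ M) (hτ : 0 < τ) {n : ℕ} (hn : n * τ ≤ T) :
    |(∫ η in (0 : ℝ)..n * τ, deriv u η * (n * τ - η) ^ (-α)) -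
        ∑ k ∈ Finset.range n, ((u ((k + 1) * τ) - u (k * τ)) / τ) *
          ∫ s in k * τ..(k + 1) * τ, (n * τ - s) ^ (-α)| ≤
      M * (1 + 1 / (1 - α)) * τ ^ (2 - α) := by
  -- `deriv u` may be junk at the endpoints; the one-sided derivative is continuous on `[0, T]`.
  set g := derivWithin u (Icc 0 T)
  have hsub : Icc 0 (n * τ) ⊆ Icc 0 T := Icc_subset_Icc_right hn
  have hcaputo : ∫ η in (0 : ℝ)..n * τ, deriv u η * (n * τ - η) ^ (-α) =
      ∫ η in (0 : ℝ)..n * τ, g η * (n * τ - η) ^ (-α) :=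
    (integral_derivWithin_Icc_mul_eq_integral_deriv_mul ⟨le_rfl, hT.le⟩ ⟨by positivity, hn⟩ _).symm
  have hquotient : ∀ k ∈ Finset.range n,
      (u ((k + 1) * τ) - u (k * τ)) / τ = (∫ η in k * τ..(k + 1) * τ, g η) / τ := fun k hk => by
    have : (k : ℝ) + 1 ≤ n := by exact_mod_cast Finset.mem_range.1 hk
    rw [integral_derivWithin_Icc_eq_sub (hu.of_le (by norm_num)) (by positivity)
      (by linarith) ((mul_le_mul_of_nonneg_right this hτ.le).trans hn)]
  rw [hcaputo, Finset.sum_congr rfl fun k hk => by rw [hquotient k hk]]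
  exact abs_integral_mul_kernel_sub_sum_average_le hα₀ hα₁ hτ hM n
    ((hu.continuousOn_derivWithin (uniqueDiffOn_Icc hT) (by norm_num)).mono hsub)
    fun x hx y hy => abs_derivWithin_Icc_sub_le hT hu hu₂ (hsub hx) (hsub hy)

/-- Truncation error of the L1 approximation: `O(τ^(2-α))`, with a constant depending
only on `α`, `T` and a bound `M` on `|u''|`. -/
theorem l1_truncation_error (α T M : ℝ) (hα0 : 0 < α) (hα1 : α < 1) (hT : 0 < T)
    (hM : 0 ≤ M) :
    ∃ C > 0, ∀ u : ℝ → ℝ, ContDiffOn ℝ 2 u (Set.Icc 0 T) →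
      (∀ s ∈ Set.Icc (0 : ℝ) T, |deriv (deriv u) s| ≤ M) →
      ∀ N n : ℕ, 1 ≤ n → n ≤ N →
        |(1 / Real.Gamma (1 - α)) *
              (∫ η in (0 : ℝ)..((n : ℝ) * (T / N)),
                deriv u η * ((n : ℝ) * (T / N) - η) ^ (-α)) -
            (1 / Real.Gamma (1 - α)) *
              ∑ k ∈ Finset.range n,
                ((u (((k : ℝ) + 1) * (T / N)) - u ((k : ℝ) * (T / N))) / (T / N)) *
                  ∫ s in ((k : ℝ) * (T / N))..(((k : ℝ) + 1) * (T / N)),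
                    ((n : ℝ) * (T / N) - s) ^ (-α)| ≤
          C * (T / N) ^ (2 - α) := by
  have hΓ : 0 < Real.Gamma (1 - α) := Real.Gamma_pos_of_pos (by linarith)
  have h1α : 0 < 1 - α := by linarith
  refine ⟨(M + 1) * (1 + 1 / (1 - α)) / Real.Gamma (1 - α), by positivity, ?_⟩
  intro u hu hu₂ N n hn hnN
  have hN : (0 : ℝ) < N := Nat.cast_pos.2 (by omega)
  have hnT : (n : ℝ) * (T / N) ≤ T := by
    rw [mul_div_assoc', div_le_iff₀ hN, mul_comm]
    exact mul_le_mul_of_nonneg_left (Nat.cast_le.2 hnN) hT.le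
  have hbound := abs_caputo_integral_sub_l1_sum_le hα0.le hα1 hT hM hu
    (fun s hs => hu₂ s (Ioo_subset_Icc_self hs)) (div_pos hT hN) hnT
  rw [← mul_sub, abs_mul, abs_of_pos (one_div_pos.2 hΓ)]
  calc _ ≤ 1 / Real.Gamma (1 - α) * (M * (1 + 1 / (1 - α)) * (T / N) ^ (2 - α)) := by gcongr
    _ ≤ (M + 1) * (1 + 1 / (1 - α)) / Real.Gamma (1 - α) * (T / N) ^ (2 - α) := by
        rw [one_div_mul_eq_div, div_mul_eq_mul_div]
        gcongr
        linarith
end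

section
/- The discrete Caputo L1 operator satisfies a discrete maximum-principle-type inequality: for 0 < α < 1, τ > 0, and any real sequence (v^k)_{k=0}^n with v^n = max_{0≤k≤n} v^k (i.e. v^n ≥ v^k for all 0 ≤ k ≤ n), one has D_τ^α v^n := Σ_{k=0}^n ω^{(α)}_{n-k} v^k ≥ (n^{1-α} - (n-1)^{1-α}) (v^n − v^0)/(Γ(2-α) τ^α) ≥ 0 when v^0 ≤ v^n; in particular the L1 operator applied at a maximum attained at t_n with v^0 ≤ v^n is nonnegative. -/
/-- Discrete maximum-principle inequality for the L1 operator: if the maximum of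
`v` over `0..n` is attained at `n`, then the L1 operator applied at `t_n` is bounded
below by `(n^(1-α) - (n-1)^(1-α))(vⁿ - v⁰)/(Γ(2-α)τ^α) ≥ 0`. -/
theorem l1_discrete_maximum_principle (α τ : ℝ) (hα0 : 0 < α) (hα1 : α < 1) (hτ : 0 < τ)
    (n : ℕ) (hn : 1 ≤ n) (v : ℕ → ℝ) (hmax : ∀ k ≤ n, v k ≤ v n) :
    (((n : ℝ) ^ (1 - α) - ((n : ℝ) - 1) ^ (1 - α)) * (v n - v 0)) /
          (Real.Gamma (2 - α) * τ ^ α) ≤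
        (1 / (Real.Gamma (2 - α) * τ ^ α)) * v n +
          (∑ j ∈ Finset.Ico 1 n,
            ((((j : ℝ) + 1) ^ (1 - α) - 2 * (j : ℝ) ^ (1 - α) + ((j : ℝ) - 1) ^ (1 - α)) /
                (Real.Gamma (2 - α) * τ ^ α)) * v (n - j)) +
          ((((n : ℝ) - 1) ^ (1 - α) - (n : ℝ) ^ (1 - α)) / (Real.Gamma (2 - α) * τ ^ α)) * v 0 ∧
      0 ≤ (((n : ℝ) ^ (1 - α) - ((n : ℝ) - 1) ^ (1 - α)) * (v n - v 0)) /
            (Real.Gamma (2 - α) * τ ^ α) := by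
  set p := 1 - α with hpdef
  have hp0 : 0 < p := by rw [hpdef]; linarith
  have hp1 : p < 1 := by rw [hpdef]; linarith
  have hC : 0 < Real.Gamma (2 - α) * τ ^ α :=
    mul_pos (Real.Gamma_pos_of_pos (by linarith)) (Real.rpow_pos_of_pos hτ α)
  set C := Real.Gamma (2 - α) * τ ^ α with hCdef
  have hn1 : (1 : ℝ) ≤ (n : ℝ) := by exact_mod_cast hn
  have hb : 0 ≤ (n : ℝ) ^ p - ((n : ℝ) - 1) ^ p :=
    sub_nonneg.2 (Real.rpow_le_rpow (by linarith) (by linarith) hp0.le)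
  have hv0 : v 0 ≤ v n := hmax 0 (Nat.zero_le n)
  -- telescoping identity
  have hT : ∀ m : ℕ, 1 ≤ m →
      ∑ j ∈ Finset.Ico 1 m, (((j : ℝ) + 1) ^ p - 2 * (j : ℝ) ^ p + ((j : ℝ) - 1) ^ p)
        = (m : ℝ) ^ p - ((m : ℝ) - 1) ^ p - 1 := by
    intro m hm
    induction m with
    | zero => omega
    | succ k ih =>
      rcases Nat.lt_or_ge k 1 with h1 | h1
      · have : k = 0 := by omega
        subst this
        simp [Real.zero_rpow hp0.ne']
      · rw [Finset.sum_Ico_succ_top h1, ih h1]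
        push_cast
        ring
  -- weights are nonpositive (concavity of x ↦ x^p)
  have hw : ∀ j ∈ Finset.Ico 1 n,
      (((j : ℝ) + 1) ^ p - 2 * (j : ℝ) ^ p + ((j : ℝ) - 1) ^ p) ≤ 0 := by
    intro j hj
    have hj1 : (1 : ℝ) ≤ (j : ℝ) := by exact_mod_cast (Finset.mem_Ico.1 hj).1
    have hconc := Real.strictConcaveOn_rpow hp0 hp1
    have h := hconc.2 (x := (j : ℝ) - 1) (y := (j : ℝ) + 1)
      (Set.mem_Ici.2 (by linarith)) (Set.mem_Ici.2 (by linarith)) (by linarith)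
      (by norm_num : (0 : ℝ) < 1 / 2) (by norm_num : (0 : ℝ) < 1 / 2) (by norm_num)
    simp only [smul_eq_mul] at h
    have heq : (1 / 2 : ℝ) * ((j : ℝ) - 1) + (1 / 2) * ((j : ℝ) + 1) = (j : ℝ) := by ring
    rw [heq] at h
    linarith
  have hsum : ∑ j ∈ Finset.Ico 1 n,
        (((j : ℝ) + 1) ^ p - 2 * (j : ℝ) ^ p + ((j : ℝ) - 1) ^ p) * v n
      ≤ ∑ j ∈ Finset.Ico 1 n,
        (((j : ℝ) + 1) ^ p - 2 * (j : ℝ) ^ p + ((j : ℝ) - 1) ^ p) * v (n - j) :=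
    Finset.sum_le_sum fun j hj =>
      mul_le_mul_of_nonpos_left (hmax (n - j) (Nat.sub_le n j)) (hw j hj)
  have hsumn : ∑ j ∈ Finset.Ico 1 n,
        (((j : ℝ) + 1) ^ p - 2 * (j : ℝ) ^ p + ((j : ℝ) - 1) ^ p) * v n
      = ((n : ℝ) ^ p - ((n : ℝ) - 1) ^ p - 1) * v n := by
    rw [← Finset.sum_mul, hT n hn]
  have key : ((n : ℝ) ^ p - ((n : ℝ) - 1) ^ p) * (v n - v 0)
      ≤ v n + (∑ j ∈ Finset.Ico 1 n,
          (((j : ℝ) + 1) ^ p - 2 * (j : ℝ) ^ p + ((j : ℝ) - 1) ^ p) * v (n - j))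
        + (((n : ℝ) - 1) ^ p - (n : ℝ) ^ p) * v 0 := by
    nlinarith [hsum, hsumn]
  refine ⟨?_, div_nonneg (mul_nonneg hb (sub_nonneg.2 hv0)) hC.le⟩
  have hrw : (1 / C) * v n +
      (∑ j ∈ Finset.Ico 1 n,
        ((((j : ℝ) + 1) ^ p - 2 * (j : ℝ) ^ p + ((j : ℝ) - 1) ^ p) / C) * v (n - j)) +
      ((((n : ℝ) - 1) ^ p - (n : ℝ) ^ p) / C) * v 0
      = (v n + (∑ j ∈ Finset.Ico 1 n,
          (((j : ℝ) + 1) ^ p - 2 * (j : ℝ) ^ p + ((j : ℝ) - 1) ^ p) * v (n - j))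
        + (((n : ℝ) - 1) ^ p - (n : ℝ) ^ p) * v 0) / C := by
    simp only [div_mul_eq_mul_div, one_mul, ← Finset.sum_div, ← add_div]
  rw [hrw]
  gcongr
end
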